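/- If n is divisible by an integer s ≥ 2 and R(X) ∈ F_2[X] is a divisor of X^{n/s} + 1 of degree r with r ≤ n/s, then F_inv on F_{2^n} is not (s·r)-th order sum-free. -/

import Mathlib

open scoped Classical
open Polynomial

noncomputable instance (n : ℕ) : Fintype (GaloisField 2 n) := Fintype.ofFinite _

/-- `F : F_{2^n} → F_{2^n}` is `k`-th order sum-free if it sums to a nonzero value over
every `k`-dimensional affine `F_2`-subspace (coset `v + E`). -/
def KthOrderSumFree (n k : ℕ) (F : GaloisField 2 n → GaloisField 2 n) : Prop :=
  ∀ (v : GaloisField 2 n) (E : Submodule (ZMod 2) (GaloisField 2 n)),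
    Module.finrank (ZMod 2) E = k →
      (∑ x ∈ Finset.univ.filter (fun x => x ∈ E), F (v + x)) ≠ 0

/-!
Let `φ` be the Frobenius `x ↦ x ^ 2` of `F_{2^n}` over `F_2`, put `P = R(X^s)` and let
`E = ker P(φ)`, the set of roots of the linearized polynomial `L_P = ∑ pᵢ X^(2^i)`.
Since `P ∣ X^n - 1`, the minimal polynomial of `φ`, counting roots of `L_P` and of `L_Q` for
`P Q = X^n - 1` shows `dim E = deg P = s r`; hence `L_P = ∏_{e ∈ E} (X - e)`.
Dividing by `X`, the polynomial `∏_{e ∈ E, e ≠ 0} (X - e)` has constant coefficient `p₀ ≠ 0`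
and linear coefficient `p₁ = 0` (as `s ≥ 2`), while by Vieta its linear coefficient is
`-p₀ ∑ e⁻¹`. So `∑_{e ∈ E} e ^ (2^n - 2) = ∑_{e ∈ E} e⁻¹ = 0`.
-/

open Module FiniteField

section Linearized

variable {K : Type*} (L : Type*) [Field K] [Fintype K] [Field L] [Algebra K L]

/-- The linearized `q`-associate `∑ pᵢ X^(q^i)` of `P = ∑ pᵢ X^i`, where `q = #K`. -/
noncomputable def linearizedPoly (P : K[X]) : L[X] :=
  P.sum fun i a => monomial (Fintype.card K ^ i) (algebraMap K L a)

variable (K) in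
noncomputable abbrev frobeniusEnd : Module.End K L := (frobeniusAlgHom K L).toLinearMap

variable {L}

theorem frobeniusEnd_pow_apply (i : ℕ) (x : L) :
    (frobeniusEnd K L ^ i) x = x ^ Fintype.card K ^ i := by
  rw [Module.End.pow_apply]
  exact congrFun (pow_iterate _ i) x

theorem eval_linearizedPoly (P : K[X]) (x : L) :
    (linearizedPoly L P).eval x = aeval (frobeniusEnd K L) P x := by
  simp only [linearizedPoly, Polynomial.sum_def, eval_finsetSum, eval_monomial,
    aeval_endomorphism, frobeniusEnd_pow_apply, Algebra.smul_def]

theorem coeff_linearizedPoly_card_pow (P : K[X]) (i : ℕ) :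
    (linearizedPoly L P).coeff (Fintype.card K ^ i) = algebraMap K L (P.coeff i) := by
  rw [linearizedPoly, coeff_sum, Polynomial.sum_def, Finset.sum_eq_single i]
  · rw [coeff_monomial, if_pos rfl]
  · intro j _ hji
    rw [coeff_monomial, if_neg fun h => hji (Nat.pow_right_injective Fintype.one_lt_card h)]
  · intro hi
    rw [notMem_support_iff.mp hi, map_zero, monomial_zero_right, coeff_zero]

theorem coeff_linearizedPoly_one (P : K[X]) :
    (linearizedPoly L P).coeff 1 = algebraMap K L (P.coeff 0) := by
  rw [← coeff_linearizedPoly_card_pow, pow_zero]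

theorem natDegree_linearizedPoly_le (P : K[X]) :
    (linearizedPoly L P).natDegree ≤ Fintype.card K ^ P.natDegree := by
  refine natDegree_sum_le_of_forall_le _ _ fun i hi => (natDegree_monomial_le _).trans ?_
  exact Nat.pow_le_pow_right Fintype.card_pos (le_natDegree_of_mem_supp i hi)

theorem Polynomial.Monic.linearizedPoly {P : K[X]} (hP : P.Monic) :
    (linearizedPoly L P).Monic := by
  refine monic_of_natDegree_le_of_coeff_eq_one _ (natDegree_linearizedPoly_le P) ?_
  rw [coeff_linearizedPoly_card_pow, hP.coeff_natDegree, map_one]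

theorem natDegree_linearizedPoly {P : K[X]} (hP : P.Monic) :
    (linearizedPoly L P).natDegree = Fintype.card K ^ P.natDegree :=
  (natDegree_linearizedPoly_le P).antisymm <| le_natDegree_of_ne_zero <| by
    rw [coeff_linearizedPoly_card_pow, hP.coeff_natDegree, map_one]
    exact one_ne_zero

variable [Fintype L]

theorem linearizedPoly_isRoot_iff_mem_ker {P : K[X]} (x : L) :
    (linearizedPoly L P).IsRoot x ↔ x ∈ LinearMap.ker (aeval (frobeniusEnd K L) P) := by
  rw [IsRoot, eval_linearizedPoly, LinearMap.mem_ker]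

theorem card_ker_aeval_frobeniusEnd {P : K[X]} :
    (Finset.univ.filter (· ∈ LinearMap.ker (aeval (frobeniusEnd K L) P))).card =
      Fintype.card K ^ finrank K (LinearMap.ker (aeval (frobeniusEnd K L) P)) := by
  rw [← Fintype.card_subtype, ← card_eq_pow_finrank]

theorem prod_ker_dvd_linearizedPoly {P : K[X]} (hP : P.Monic) :
    ∏ x ∈ Finset.univ.filter (· ∈ LinearMap.ker (aeval (frobeniusEnd K L) P)), (X - C x) ∣
      linearizedPoly L P := by
  rw [Finset.prod_eq_multiset_prod,
    Multiset.prod_X_sub_C_dvd_iff_le_roots hP.linearizedPoly.ne_zero,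
    Finset.val_le_iff_val_subset]
  intro x hx
  rw [mem_roots hP.linearizedPoly.ne_zero, linearizedPoly_isRoot_iff_mem_ker]
  exact (Finset.mem_filter.mp hx).2

theorem finrank_ker_aeval_frobeniusEnd_le {P : K[X]} (hP : P.Monic) :
    finrank K (LinearMap.ker (aeval (frobeniusEnd K L) P)) ≤ P.natDegree := by
  have hcard :=
    natDegree_le_of_dvd (prod_ker_dvd_linearizedPoly (L := L) hP) hP.linearizedPoly.ne_zero
  rw [natDegree_finsetProd_X_sub_C_eq_card, card_ker_aeval_frobeniusEnd,
    natDegree_linearizedPoly hP] at hcard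
  exact (Nat.pow_le_pow_iff_right (Fintype.one_lt_card (α := K))).mp hcard

theorem finrank_ker_aeval_frobeniusEnd {P : K[X]} (hP : P.Monic)
    (hdvd : P ∣ X ^ finrank K L - 1) :
    finrank K (LinearMap.ker (aeval (frobeniusEnd K L) P)) = P.natDegree := by
  obtain ⟨Q, hPQ⟩ := hdvd
  have hQ : Q.Monic := hP.of_mul_monic_left (hPQ ▸ monic_X_pow_sub_C 1 finrank_pos.ne')
  have hdeg : P.natDegree + Q.natDegree = finrank K L := by
    rw [← hP.natDegree_mul hQ, ← hPQ, ← C_1, natDegree_X_pow_sub_C]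
  have hrange : LinearMap.range (aeval (frobeniusEnd K L) Q) ≤
      LinearMap.ker (aeval (frobeniusEnd K L) P) := by
    rw [LinearMap.range_le_ker_iff, ← Module.End.mul_eq_comp, ← map_mul, ← hPQ,
      ← minpoly_frobeniusAlgHom, minpoly.aeval]
  have := LinearMap.finrank_range_add_finrank_ker (aeval (frobeniusEnd K L) Q)
  have := Submodule.finrank_mono hrange
  have := finrank_ker_aeval_frobeniusEnd_le (L := L) hP
  have := finrank_ker_aeval_frobeniusEnd_le (L := L) hQ
  omega

theorem linearizedPoly_eq_prod_ker {P : K[X]} (hP : P.Monic) (hdvd : P ∣ X ^ finrank K L - 1) :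
    linearizedPoly L P =
      ∏ x ∈ Finset.univ.filter (· ∈ LinearMap.ker (aeval (frobeniusEnd K L) P)), (X - C x) := by
  refine eq_of_monic_of_dvd_of_natDegree_le (monic_prod_of_monic _ _ fun x _ => monic_X_sub_C x)
    hP.linearizedPoly (prod_ker_dvd_linearizedPoly hP) ?_
  rw [natDegree_finsetProd_X_sub_C_eq_card, card_ker_aeval_frobeniusEnd,
    natDegree_linearizedPoly hP, finrank_ker_aeval_frobeniusEnd hP hdvd]

end Linearized

theorem coeff_linearizedPoly_two {L : Type*} [Field L] [Algebra (ZMod 2) L] (P : (ZMod 2)[X]) :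
    (linearizedPoly L P).coeff 2 = algebraMap (ZMod 2) L (P.coeff 1) := by
  simpa using coeff_linearizedPoly_card_pow (L := L) P 1

section Vieta

variable {L : Type*} [Field L]

theorem coeff_one_prod_X_sub_C (s : Finset L) (hs : ∀ x ∈ s, x ≠ 0) :
    (∏ x ∈ s, (X - C x)).coeff 1 = -(∏ x ∈ s, (X - C x)).coeff 0 * ∑ x ∈ s, x⁻¹ := by
  induction s using Finset.induction_on with
  | empty => simp [coeff_one]
  | insert a s ha ih =>
    have ha0 := hs a (Finset.mem_insert_self a s)
    rw [Finset.prod_insert ha, Finset.sum_insert ha, mul_comm (X - C a), coeff_mul_X_sub_C,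
      mul_coeff_zero, ih fun x hx => hs x (Finset.mem_insert_of_mem hx)]
    simp only [coeff_sub, coeff_X_zero, coeff_C_zero, zero_sub]
    field_simp
    ring

theorem sum_inv_eq_zero_of_coeff_prod_X_sub_C {s : Finset L} (h0 : (0 : L) ∈ s)
    (h1 : (∏ x ∈ s, (X - C x)).coeff 1 ≠ 0) (h2 : (∏ x ∈ s, (X - C x)).coeff 2 = 0) :
    ∑ x ∈ s, x⁻¹ = 0 := by
  have hsplit : ∏ x ∈ s, (X - C x) = X * ∏ x ∈ s.erase 0, (X - C x) := by
    rw [← Finset.mul_prod_erase s _ h0, C_0, sub_zero]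
  rw [hsplit, coeff_X_mul] at h1 h2
  have hvieta := coeff_one_prod_X_sub_C (s.erase 0) fun x hx => Finset.ne_of_mem_erase hx
  rw [h2, zero_eq_mul, neg_eq_zero] at hvieta
  rw [← Finset.add_sum_erase s _ h0, inv_zero, zero_add]
  exact hvieta.resolve_left h1

end Vieta

theorem FiniteField.pow_card_sub_two_eq_inv {K : Type*} [Field K] [Fintype K]
    (hK : 2 < Fintype.card K) (x : K) : x ^ (Fintype.card K - 2) = x⁻¹ := by
  rcases eq_or_ne x 0 with rfl | hx
  · rw [zero_pow (by omega), inv_zero]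
  · refine eq_inv_of_mul_eq_one_left ?_
    rw [← pow_succ, show Fintype.card K - 2 + 1 = Fintype.card K - 1 by omega,
      pow_card_sub_one_eq_one x hx]

theorem GaloisField.pow_two_pow_sub_two_eq_inv {n : ℕ} (hn : 2 ≤ n) (x : GaloisField 2 n) :
    x ^ (2 ^ n - 2) = x⁻¹ := by
  have hcard : Fintype.card (GaloisField 2 n) = 2 ^ n := by
    rw [← Nat.card_eq_fintype_card, GaloisField.card 2 n (by omega)]
  rw [← hcard]
  exact pow_card_sub_two_eq_inv (hcard ▸ hn.trans_lt n.lt_two_pow_self) x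

theorem Polynomial.coeff_zero_ne_zero_of_dvd_X_pow_sub_one {R : Type*} [CommRing R]
    [Nontrivial R] {P : R[X]} {n : ℕ} (hn : n ≠ 0) (hdvd : P ∣ X ^ n - 1) : P.coeff 0 ≠ 0 := by
  intro h0
  have := (X_dvd_iff.mpr h0).trans hdvd
  rw [X_dvd_iff, coeff_sub, coeff_X_pow, if_neg hn.symm, coeff_one_zero, zero_sub,
    neg_eq_zero] at this
  exact one_ne_zero this

theorem Polynomial.expand_dvd_X_pow_mul_sub_one {R : Type*} [CommRing R] {f : R[X]} {m : ℕ}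
    (s : ℕ) (hdvd : f ∣ X ^ m - 1) : expand R s f ∣ X ^ (m * s) - 1 := by
  simpa [pow_mul'] using _root_.map_dvd (expand R s) hdvd

theorem Polynomial.monic_of_ne_zero_zmod_two {P : (ZMod 2)[X]} (hP : P ≠ 0) : P.Monic :=
  (by decide : ∀ a : ZMod 2, a ≠ 0 → a = 1) _ (leadingCoeff_ne_zero.mpr hP)

theorem not_sumFree_of_divisor_composed_general (n s r : ℕ) (hn : 0 < n) (hs : 2 ≤ s)
    (hsn : s ∣ n) (R : (ZMod 2)[X]) (hdeg : R.natDegree = r)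
    (hdvd : R ∣ (X ^ (n / s) + 1 : (ZMod 2)[X])) :
    ¬ KthOrderSumFree n (s * r) (fun x => x ^ (2 ^ n - 2)) := by
  have hR : R.Monic := monic_of_ne_zero_zmod_two <| ne_zero_of_dvd_ne_zero
    (monic_X_pow_add_C 1 (Nat.div_pos (Nat.le_of_dvd hn hsn) (by omega)).ne').ne_zero hdvd
  rw [← CharTwo.sub_eq_add] at hdvd
  set P := expand (ZMod 2) s R
  have hP : P.Monic := (monic_expand_iff (by omega)).mpr hR
  have hPdvd : P ∣ X ^ finrank (ZMod 2) (GaloisField 2 n) - 1 := by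
    rw [GaloisField.finrank 2 hn.ne', ← Nat.div_mul_cancel hsn]
    exact expand_dvd_X_pow_mul_sub_one s hdvd
  intro hSF
  refine hSF 0 (LinearMap.ker (aeval (frobeniusEnd (ZMod 2) (GaloisField 2 n)) P)) ?_ ?_
  · rw [finrank_ker_aeval_frobeniusEnd hP hPdvd, natDegree_expand, hdeg, mul_comm]
  simp only [zero_add, GaloisField.pow_two_pow_sub_two_eq_inv (hs.trans (Nat.le_of_dvd hn hsn))]
  refine sum_inv_eq_zero_of_coeff_prod_X_sub_C
    (Finset.mem_filter.mpr ⟨Finset.mem_univ _, Submodule.zero_mem _⟩) ?_ ?_ <;>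
    rw [← linearizedPoly_eq_prod_ker hP hPdvd]
  · rw [coeff_linearizedPoly_one, _root_.map_ne_zero]
    exact coeff_zero_ne_zero_of_dvd_X_pow_sub_one finrank_pos.ne' hPdvd
  · rw [coeff_linearizedPoly_two, coeff_expand (by omega),
      if_neg (Nat.not_dvd_of_pos_of_lt one_pos hs), map_zero]

/-- If `s ≥ 2` divides `n` and `R ∈ F_2[X]` is a divisor of `X^(n/s) + 1` of degree
`r ≤ n/s`, then `F_inv` on `F_{2^n}` is not `(s·r)`-th order sum-free. -/
theorem not_sumFree_of_divisor_composed (n s r : ℕ) (hn : 0 < n) (hs : 2 ≤ s)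
    (hsn : s ∣ n) (R : (ZMod 2)[X]) (hdeg : R.natDegree = r) (hr : r ≤ n / s)
    (hdvd : R ∣ (X ^ (n / s) + 1 : (ZMod 2)[X])) :
    ¬ KthOrderSumFree n (s * r) (fun x => x ^ (2 ^ n - 2)) :=
  not_sumFree_of_divisor_composed_general n s r hn hs hsn R hdeg hdvd
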